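/- Let A ≪ B in 𝕀ℝ, let F : 𝕀_{[A,B]} → 𝕀ℝ be a bounded interval function, let C = A + s(B−A) for some s ∈ (0,1) (so C lies on the segment from A to B), and let 𝔓'[A,B] be the set of partitions of 𝕀_{[A,B]} that contain C. Then ∫̲_A^B F(X)dX = sup{σ(F,𝒫) : 𝒫 ∈ 𝔓'[A,B]} and ∫̄_A^B F(X)dX = inf{Σ(F,𝒫) : 𝒫 ∈ 𝔓'[A,B]}. -/

import Mathlib

/-- `𝕀ℝ`: the set of nonempty closed bounded real intervals, identified with
pairs `(lo, hi) ∈ ℝ × ℝ` with `lo ≤ hi`.  The subtype order inherited from the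
product order on `ℝ × ℝ` is exactly the Kulisch–Miranker order, and the
inherited metric (sup metric of `ℝ × ℝ`) is exactly the Moore metric `d_M`. -/
abbrev IR : Type := {p : ℝ × ℝ // p.1 ≤ p.2}

namespace IR

/-- Left endpoint projection `π₁`. -/
def lo (A : IR) : ℝ := A.val.1

/-- Right endpoint projection `π₂`. -/
def hi (A : IR) : ℝ := A.val.2

/-- The strict Kulisch–Miranker order `A ≪ B`. -/
def sll (A B : IR) : Prop := lo A < lo B ∧ hi A < hi B

/-- The Moore metric `d_M`. -/
noncomputable def dM (A B : IR) : ℝ := max |lo B - lo A| |hi B - hi A|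

/-- `𝕀_{[A,B]} = {X ∈ 𝕀ℝ : A ≤ X ≤ B}`. -/
def box (A B : IR) : Set IR := {X : IR | A ≤ X ∧ X ≤ B}

/-- The interval `[u,v]` (with a junk degenerate value if `u > v`). -/
noncomputable def mkI (u v : ℝ) : IR := if h : u ≤ v then ⟨(u, v), h⟩ else ⟨(u, u), le_rfl⟩

/-- The point `A + t(B - A)` on the segment from `A` to `B`. -/
noncomputable def seg (A B : IR) (t : ℝ) : IR :=
  mkI (lo A + t * (lo B - lo A)) (hi A + t * (hi B - hi A))

/-- Componentwise infimum of a set of intervals, as a pair of reals. -/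
noncomputable def infS (S : Set IR) : ℝ × ℝ := (sInf (lo '' S), sInf (hi '' S))

/-- Componentwise supremum of a set of intervals, as a pair of reals. -/
noncomputable def supS (S : Set IR) : ℝ × ℝ := (sSup (lo '' S), sSup (hi '' S))

/-- A partition `A = P₀ ≪ P₁ ≪ ⋯ ≪ P_N = B` of `𝕀_{[A,B]}`, described by its
parameters `0 = t₀ < t₁ < ⋯ < t_N = 1` (so that `P_k = A + t_k (B - A)`). -/
structure Partition where
  n : ℕ
  npos : 0 < n
  t : ℕ → ℝ
  t0 : t 0 = 0
  tn : t n = 1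
  mono : ∀ i < n, t i < t (i + 1)

/-- The set of parameters of a partition. -/
def Partition.pts (P : Partition) : Set ℝ := P.t '' Set.Iic P.n

/-- The set of points `P_k = A + t_k(B-A)` of a partition of `𝕀_{[A,B]}`. -/
noncomputable def Partition.ipts (A B : IR) (P : Partition) : Set IR :=
  (fun i => seg A B (P.t i)) '' Set.Iic P.n

/-- Lower Riemann sum `σ(F, 𝒫)` (as a pair of reals; interval sums are
componentwise and `λ • [u,v] = [λu, λv]` for the scalars `λ = d_M ≥ 0`). -/
noncomputable def lowerSum (A B : IR) (F : IR → IR) (P : Partition) : ℝ × ℝ :=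
  ∑ k ∈ Finset.range P.n,
    dM (seg A B (P.t k)) (seg A B (P.t (k + 1))) •
      infS (F '' box (seg A B (P.t k)) (seg A B (P.t (k + 1))))

/-- Upper Riemann sum `Σ(F, 𝒫)`. -/
noncomputable def upperSum (A B : IR) (F : IR → IR) (P : Partition) : ℝ × ℝ :=
  ∑ k ∈ Finset.range P.n,
    dM (seg A B (P.t k)) (seg A B (P.t (k + 1))) •
      supS (F '' box (seg A B (P.t k)) (seg A B (P.t (k + 1))))

/-- The lower integral `∫̲_A^B F(X)dX`: componentwise supremum of the lower
Riemann sums over all partitions. -/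
noncomputable def lowerInt (A B : IR) (F : IR → IR) : ℝ × ℝ :=
  (sSup (Set.range fun P : Partition => (lowerSum A B F P).1),
   sSup (Set.range fun P : Partition => (lowerSum A B F P).2))

/-- The upper integral `∫̄_A^B F(X)dX`: componentwise infimum of the upper
Riemann sums over all partitions. -/
noncomputable def upperInt (A B : IR) (F : IR → IR) : ℝ × ℝ :=
  (sInf (Set.range fun P : Partition => (upperSum A B F P).1),
   sInf (Set.range fun P : Partition => (upperSum A B F P).2))

/-- `F` is bounded on `𝕀_{[A,B]}` (order bounded, equivalently metrically
bounded). -/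
def BoundedOn (F : IR → IR) (A B : IR) : Prop :=
  ∃ C D : IR, ∀ X ∈ box A B, C ≤ F X ∧ F X ≤ D

end IR

/-!
Refining a partition can only increase a lower Riemann sum and decrease an upper one: when a
cell `𝕀_{[P_j,P_{j+1}]}` is split at a point `C` of the segment, the Moore lengths of the two
halves add up to that of the cell, and the infimum (supremum) of `F` over each half is at least
(at most) its infimum (supremum) over the whole cell, because both halves lie inside it and `F`
is bounded there. Inserting `C` into an arbitrary partition therefore gives a partition through
`C` with a better lower and a better upper sum, so restricting to partitions through `C` changes
neither the supremum of the lower sums nor the infimum of the upper sums.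
-/

open Set

theorem csSup_range_eq_csSup_image {ι α : Type*} [ConditionallyCompleteLinearOrder α]
    {g : ι → α} {S : Set ι} (h : ∀ i, ∃ j ∈ S, g i ≤ g j) :
    sSup (range g) = sSup (g '' S) :=
  csSup_eq_csSup_of_forall_exists_le
    (by rintro _ ⟨i, rfl⟩; obtain ⟨j, hj, hij⟩ := h i; exact ⟨g j, mem_image_of_mem g hj, hij⟩)
    (by rintro _ ⟨j, -, rfl⟩; exact ⟨g j, mem_range_self j, le_rfl⟩)

theorem csInf_range_eq_csInf_image {ι α : Type*} [ConditionallyCompleteLinearOrder α]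
    {g : ι → α} {S : Set ι} (h : ∀ i, ∃ j ∈ S, g j ≤ g i) :
    sInf (range g) = sInf (g '' S) :=
  csSup_range_eq_csSup_image (α := αᵒᵈ) h

/-- The sequence `t` with `s` inserted at position `j + 1`. -/
def insertAt {α : Type*} (t : ℕ → α) (j : ℕ) (s : α) (i : ℕ) : α :=
  if i ≤ j then t i else if i = j + 1 then s else t (i - 1)

section InsertAt

variable {α : Type*} (t : ℕ → α) {j : ℕ} (s : α)

theorem insertAt_of_le {i : ℕ} (hi : i ≤ j) : insertAt t j s i = t i := if_pos hi

theorem insertAt_succ : insertAt t j s (j + 1) = s := by simp [insertAt]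

theorem insertAt_add_one {i : ℕ} (hi : j < i) : insertAt t j s (i + 1) = t i := by
  simp [insertAt, show ¬i + 1 ≤ j by omega, show i ≠ j by omega]

theorem sum_range_le_sum_insertAt {M : Type*} [AddCommMonoid M] [PartialOrder M]
    [IsOrderedAddMonoid M] (φ : α → α → M) {n : ℕ} (hjn : j < n)
    (hsplit : φ (t j) (t (j + 1)) ≤ φ (t j) s + φ s (t (j + 1))) :
    ∑ k ∈ Finset.range n, φ (t k) (t (k + 1)) ≤
      ∑ k ∈ Finset.range (n + 1), φ (insertAt t j s k) (insertAt t j s (k + 1)) := by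
  induction n, Nat.succ_le_of_lt hjn using Nat.le_induction with
  | base =>
    have hhead : ∑ k ∈ Finset.range j, φ (insertAt t j s k) (insertAt t j s (k + 1)) =
        ∑ k ∈ Finset.range j, φ (t k) (t (k + 1)) := by
      refine Finset.sum_congr rfl fun k hk => ?_
      have hk : k < j := Finset.mem_range.1 hk
      rw [insertAt_of_le t s hk.le, insertAt_of_le t s hk]
    rw [Finset.sum_range_succ, Finset.sum_range_succ, Finset.sum_range_succ, hhead,
      insertAt_of_le t s le_rfl, insertAt_succ, insertAt_add_one t s (Nat.lt_succ_self j),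
      add_assoc]
    exact add_le_add le_rfl hsplit
  | succ n hn ih =>
    rw [Finset.sum_range_succ, Finset.sum_range_succ _ (n + 1), insertAt_add_one t s hn,
      insertAt_add_one t s (Nat.lt_succ_of_lt hn)]
    exact add_le_add (ih hn) le_rfl

theorem sum_insertAt_le_sum_range {M : Type*} [AddCommMonoid M] [PartialOrder M]
    [IsOrderedAddMonoid M] (φ : α → α → M) {n : ℕ} (hjn : j < n)
    (hsplit : φ (t j) s + φ s (t (j + 1)) ≤ φ (t j) (t (j + 1))) :
    ∑ k ∈ Finset.range (n + 1), φ (insertAt t j s k) (insertAt t j s (k + 1)) ≤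
      ∑ k ∈ Finset.range n, φ (t k) (t (k + 1)) :=
  sum_range_le_sum_insertAt (M := Mᵒᵈ) t s φ hjn hsplit

end InsertAt

namespace IR

theorem ext_lo_hi {X Y : IR} (hlo : lo X = lo Y) (hhi : hi X = hi Y) : X = Y :=
  Subtype.ext (Prod.ext hlo hhi)

theorem le_iff {X Y : IR} : X ≤ Y ↔ lo X ≤ lo Y ∧ hi X ≤ hi Y := Iff.rfl

theorem lo_mono : Monotone lo := fun _ _ h => h.1

theorem hi_mono : Monotone hi := fun _ _ h => h.2

theorem le_of_sll {A B : IR} (h : sll A B) : A ≤ B := ⟨h.1.le, h.2.le⟩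

theorem dM_nonneg (X Y : IR) : 0 ≤ dM X Y := le_max_of_le_left (abs_nonneg _)

theorem infS_anti {S T : Set IR} (hST : S ⊆ T) (hS : S.Nonempty) (hT : BddBelow T) :
    infS T ≤ infS S :=
  ⟨csInf_le_csInf (lo_mono.map_bddBelow hT) (hS.image lo) (image_mono hST),
    csInf_le_csInf (hi_mono.map_bddBelow hT) (hS.image hi) (image_mono hST)⟩

theorem supS_mono {S T : Set IR} (hST : S ⊆ T) (hS : S.Nonempty) (hT : BddAbove T) :
    supS S ≤ supS T :=
  ⟨csSup_le_csSup (lo_mono.map_bddAbove hT) (hS.image lo) (image_mono hST),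
    csSup_le_csSup (hi_mono.map_bddAbove hT) (hS.image hi) (image_mono hST)⟩

theorem box_mono {X X' Y Y' : IR} (hX : X ≤ X') (hY : Y' ≤ Y) : box X' Y' ⊆ box X Y :=
  fun _ hZ => ⟨hX.trans hZ.1, hZ.2.trans hY⟩

theorem box_nonempty {X Y : IR} (h : X ≤ Y) : (box X Y).Nonempty := ⟨X, le_rfl, h⟩

theorem BoundedOn.bddBelow {F : IR → IR} {A B : IR} (hF : BoundedOn F A B) :
    BddBelow (F '' box A B) := by
  obtain ⟨C, _, hC⟩ := hF
  exact ⟨C, by rintro _ ⟨X, hX, rfl⟩; exact (hC X hX).1⟩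

theorem BoundedOn.bddAbove {F : IR → IR} {A B : IR} (hF : BoundedOn F A B) :
    BddAbove (F '' box A B) := by
  obtain ⟨_, D, hD⟩ := hF
  exact ⟨D, by rintro _ ⟨X, hX, rfl⟩; exact (hD X hX).2⟩

section Segment

variable (A B : IR) {t t' : ℝ}

theorem seg_spec (ht : t ∈ Icc (0 : ℝ) 1) :
    lo (seg A B t) = lo A + t * (lo B - lo A) ∧ hi (seg A B t) = hi A + t * (hi B - hi A) := by
  have hA : lo A ≤ hi A := A.2
  have hB : lo B ≤ hi B := B.2
  rw [seg, mkI, dif_pos (by nlinarith [ht.1, ht.2])]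
  exact ⟨rfl, rfl⟩

theorem seg_zero : seg A B 0 = A := by
  obtain ⟨hlo, hhi⟩ := seg_spec A B (left_mem_Icc.2 zero_le_one)
  exact ext_lo_hi (by simpa using hlo) (by simpa using hhi)

theorem seg_one : seg A B 1 = B := by
  obtain ⟨hlo, hhi⟩ := seg_spec A B (right_mem_Icc.2 zero_le_one)
  exact ext_lo_hi (by simpa using hlo) (by simpa using hhi)

theorem seg_mono {A B : IR} (hAB : A ≤ B) (ht : t ∈ Icc (0 : ℝ) 1) (ht' : t' ∈ Icc (0 : ℝ) 1)
    (htt' : t ≤ t') : seg A B t ≤ seg A B t' := by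
  obtain ⟨hlo, hhi⟩ := seg_spec A B ht
  obtain ⟨hlo', hhi'⟩ := seg_spec A B ht'
  obtain ⟨hAB_lo, hAB_hi⟩ := le_iff.1 hAB
  rw [le_iff, hlo, hhi, hlo', hhi']
  constructor <;> nlinarith

theorem dM_seg (ht : t ∈ Icc (0 : ℝ) 1) (ht' : t' ∈ Icc (0 : ℝ) 1) :
    dM (seg A B t) (seg A B t') = |t' - t| * dM A B := by
  obtain ⟨hlo, hhi⟩ := seg_spec A B ht
  obtain ⟨hlo', hhi'⟩ := seg_spec A B ht'
  have hdlo : lo A + t' * (lo B - lo A) - (lo A + t * (lo B - lo A)) = (t' - t) * (lo B - lo A) :=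
    by ring
  have hdhi : hi A + t' * (hi B - hi A) - (hi A + t * (hi B - hi A)) = (t' - t) * (hi B - hi A) :=
    by ring
  rw [dM, dM, hlo, hhi, hlo', hhi', hdlo, hdhi, abs_mul, abs_mul,
    mul_max_of_nonneg _ _ (abs_nonneg _)]

theorem dM_seg_add {u c v : ℝ} (hu : u ∈ Icc (0 : ℝ) 1) (hv : v ∈ Icc (0 : ℝ) 1) (huc : u ≤ c)
    (hcv : c ≤ v) :
    dM (seg A B u) (seg A B v) = dM (seg A B u) (seg A B c) + dM (seg A B c) (seg A B v) := by
  have hc : c ∈ Icc (0 : ℝ) 1 := ⟨hu.1.trans huc, hcv.trans hv.2⟩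
  rw [dM_seg A B hu hv, dM_seg A B hu hc, dM_seg A B hc hv, abs_of_nonneg (by linarith),
    abs_of_nonneg (by linarith), abs_of_nonneg (by linarith)]
  ring

theorem box_seg_subset {A B : IR} (hAB : A ≤ B) (ht : t ∈ Icc (0 : ℝ) 1)
    (ht' : t' ∈ Icc (0 : ℝ) 1) : box (seg A B t) (seg A B t') ⊆ box A B := by
  have h := box_mono (seg_mono hAB (left_mem_Icc.2 zero_le_one) ht ht.1)
    (seg_mono hAB ht' (right_mem_Icc.2 zero_le_one) ht'.2)
  rwa [seg_zero, seg_one] at h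

end Segment

noncomputable def lowerTerm (A B : IR) (F : IR → IR) (u v : ℝ) : ℝ × ℝ :=
  dM (seg A B u) (seg A B v) • infS (F '' box (seg A B u) (seg A B v))

noncomputable def upperTerm (A B : IR) (F : IR → IR) (u v : ℝ) : ℝ × ℝ :=
  dM (seg A B u) (seg A B v) • supS (F '' box (seg A B u) (seg A B v))

section Split

variable {A B : IR} {F : IR → IR} (hAB : A ≤ B) (hF : BoundedOn F A B) {u c v : ℝ}
  (hu : u ∈ Icc (0 : ℝ) 1) (hv : v ∈ Icc (0 : ℝ) 1) (huc : u ≤ c) (hcv : c ≤ v)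
include hAB hF hu hv huc hcv

theorem lowerTerm_le_add : lowerTerm A B F u v ≤ lowerTerm A B F u c + lowerTerm A B F c v := by
  have hc : c ∈ Icc (0 : ℝ) 1 := ⟨hu.1.trans huc, hcv.trans hv.2⟩
  have hbdd : BddBelow (F '' box (seg A B u) (seg A B v)) :=
    hF.bddBelow.mono (image_mono (box_seg_subset hAB hu hv))
  have hleft : infS (F '' box (seg A B u) (seg A B v)) ≤
      infS (F '' box (seg A B u) (seg A B c)) :=
    infS_anti (image_mono (box_mono le_rfl (seg_mono hAB hc hv hcv)))
      ((box_nonempty (seg_mono hAB hu hc huc)).image F) hbdd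
  have hright : infS (F '' box (seg A B u) (seg A B v)) ≤
      infS (F '' box (seg A B c) (seg A B v)) :=
    infS_anti (image_mono (box_mono (seg_mono hAB hu hc huc) le_rfl))
      ((box_nonempty (seg_mono hAB hc hv hcv)).image F) hbdd
  rw [lowerTerm, lowerTerm, lowerTerm, dM_seg_add A B hu hv huc hcv, add_smul]
  exact add_le_add (smul_le_smul_of_nonneg_left hleft (dM_nonneg _ _))
    (smul_le_smul_of_nonneg_left hright (dM_nonneg _ _))

theorem add_upperTerm_le : upperTerm A B F u c + upperTerm A B F c v ≤ upperTerm A B F u v := by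
  have hc : c ∈ Icc (0 : ℝ) 1 := ⟨hu.1.trans huc, hcv.trans hv.2⟩
  have hbdd : BddAbove (F '' box (seg A B u) (seg A B v)) :=
    hF.bddAbove.mono (image_mono (box_seg_subset hAB hu hv))
  have hleft : supS (F '' box (seg A B u) (seg A B c)) ≤
      supS (F '' box (seg A B u) (seg A B v)) :=
    supS_mono (image_mono (box_mono le_rfl (seg_mono hAB hc hv hcv)))
      ((box_nonempty (seg_mono hAB hu hc huc)).image F) hbdd
  have hright : supS (F '' box (seg A B c) (seg A B v)) ≤
      supS (F '' box (seg A B u) (seg A B v)) :=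
    supS_mono (image_mono (box_mono (seg_mono hAB hu hc huc) le_rfl))
      ((box_nonempty (seg_mono hAB hc hv hcv)).image F) hbdd
  rw [upperTerm, upperTerm, upperTerm, dM_seg_add A B hu hv huc hcv, add_smul]
  exact add_le_add (smul_le_smul_of_nonneg_left hleft (dM_nonneg _ _))
    (smul_le_smul_of_nonneg_left hright (dM_nonneg _ _))

end Split

namespace Partition

theorem t_mem_Icc (P : Partition) {i : ℕ} (hi : i ≤ P.n) : P.t i ∈ Icc (0 : ℝ) 1 := by
  have hmono : MonotoneOn P.t (Iic P.n) := (strictMonoOn_Iic_of_lt_succ P.mono).monotoneOn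
  exact ⟨P.t0 ▸ hmono (Nat.zero_le _) hi (Nat.zero_le _), P.tn ▸ hmono hi (mem_Iic.2 le_rfl) hi⟩

theorem exists_eq_or_mem_Ioo (P : Partition) {s : ℝ} (hs : s ∈ Icc (0 : ℝ) 1) :
    (∃ i ≤ P.n, P.t i = s) ∨ ∃ j < P.n, s ∈ Ioo (P.t j) (P.t (j + 1)) := by
  classical
  have hex : ∃ i, s ≤ P.t i := ⟨P.n, P.tn ▸ hs.2⟩
  have hin : Nat.find hex ≤ P.n := Nat.find_min' hex (P.tn ▸ hs.2)
  rcases (Nat.find_spec hex).eq_or_lt with heq | hlt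
  · exact Or.inl ⟨_, hin, heq.symm⟩
  obtain ⟨j, hj⟩ : ∃ j, Nat.find hex = j + 1 := by
    refine Nat.exists_eq_succ_of_ne_zero fun h0 => ?_
    rw [h0, P.t0] at hlt
    exact hlt.not_ge hs.1
  refine Or.inr ⟨j, by omega, lt_of_not_ge (Nat.find_min hex (by omega)), hj ▸ hlt⟩

def insert (P : Partition) {j : ℕ} (hj : j < P.n) {s : ℝ} (hs : s ∈ Ioo (P.t j) (P.t (j + 1))) :
    Partition where
  n := P.n + 1
  npos := P.n.succ_pos
  t := insertAt P.t j s
  t0 := by rw [insertAt_of_le _ _ (Nat.zero_le j), P.t0]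
  tn := by rw [insertAt_add_one _ _ hj, P.tn]
  mono i hi := by
    rcases lt_trichotomy i j with hij | rfl | hij
    · rw [insertAt_of_le _ _ hij.le, insertAt_of_le _ _ hij]
      exact P.mono i (by omega)
    · rw [insertAt_of_le _ _ le_rfl, insertAt_succ]
      exact hs.1
    obtain ⟨k, rfl⟩ : ∃ k, i = k + 1 := Nat.exists_eq_add_one_of_ne_zero (by omega)
    rw [insertAt_add_one _ _ (by omega : j < k + 1)]
    rcases (Nat.lt_succ_iff.1 hij).eq_or_lt with rfl | hjk
    · rw [insertAt_succ]
      exact hs.2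
    · rw [insertAt_add_one _ _ hjk]
      exact P.mono k (by omega)

end Partition

section Refinement

variable {A B : IR} {F : IR → IR} (hAB : A ≤ B) (hF : BoundedOn F A B)
include hAB hF

theorem lowerSum_le_lowerSum_insert (P : Partition) {j : ℕ} (hj : j < P.n) {s : ℝ}
    (hs : s ∈ Ioo (P.t j) (P.t (j + 1))) : lowerSum A B F P ≤ lowerSum A B F (P.insert hj hs) :=
  sum_range_le_sum_insertAt P.t s (lowerTerm A B F) hj
    (lowerTerm_le_add hAB hF (P.t_mem_Icc hj.le) (P.t_mem_Icc hj) hs.1.le hs.2.le)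

theorem upperSum_insert_le_upperSum (P : Partition) {j : ℕ} (hj : j < P.n) {s : ℝ}
    (hs : s ∈ Ioo (P.t j) (P.t (j + 1))) : upperSum A B F (P.insert hj hs) ≤ upperSum A B F P :=
  sum_insertAt_le_sum_range P.t s (upperTerm A B F) hj
    (add_upperTerm_le hAB hF (P.t_mem_Icc hj.le) (P.t_mem_Icc hj) hs.1.le hs.2.le)

theorem exists_refinement_through {s : ℝ} (hs : s ∈ Icc (0 : ℝ) 1) (P : Partition) :
    ∃ Q ∈ {Q : Partition | seg A B s ∈ Q.ipts A B},
      lowerSum A B F P ≤ lowerSum A B F Q ∧ upperSum A B F Q ≤ upperSum A B F P := by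
  rcases P.exists_eq_or_mem_Ioo hs with ⟨i, hi, rfl⟩ | ⟨j, hj, hjs⟩
  · exact ⟨P, ⟨i, hi, rfl⟩, le_rfl, le_rfl⟩
  · refine ⟨P.insert hj hjs, ⟨j + 1, Nat.succ_le_succ hj.le, ?_⟩,
      lowerSum_le_lowerSum_insert hAB hF P hj hjs, upperSum_insert_le_upperSum hAB hF P hj hjs⟩
    exact congrArg (seg A B) (insertAt_succ P.t s)

end Refinement

end IR

open IR in
/-- Let `A ≪ B`, `F` bounded, `C = A + s(B−A)` with `s ∈ (0,1)`, and let
`𝔓'[A,B]` be the set of partitions of `𝕀_{[A,B]}` whose set of points contains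
`C`.  Then `∫̲_A^B F = sup{σ(F,𝒫) : 𝒫 ∈ 𝔓'[A,B]}` and
`∫̄_A^B F = inf{Σ(F,𝒫) : 𝒫 ∈ 𝔓'[A,B]}` (componentwise). -/
theorem IR.integral_via_partitions_through_point (A B : IR) (h : sll A B)
    (F : IR → IR) (hF : BoundedOn F A B) (s : ℝ) (hs : s ∈ Set.Ioo (0 : ℝ) 1) :
    lowerInt A B F =
      (sSup ((fun Q => (lowerSum A B F Q).1) ''
        {P : Partition | seg A B s ∈ Partition.ipts A B P}),
       sSup ((fun Q => (lowerSum A B F Q).2) ''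
        {P : Partition | seg A B s ∈ Partition.ipts A B P})) ∧
    upperInt A B F =
      (sInf ((fun Q => (upperSum A B F Q).1) ''
        {P : Partition | seg A B s ∈ Partition.ipts A B P}),
       sInf ((fun Q => (upperSum A B F Q).2) ''
        {P : Partition | seg A B s ∈ Partition.ipts A B P})) := by
  have hrefine := exists_refinement_through (le_of_sll h) hF (Ioo_subset_Icc_self hs)
  refine ⟨Prod.ext ?_ ?_, Prod.ext ?_ ?_⟩
  · exact csSup_range_eq_csSup_image fun P =>
      let ⟨Q, hQ, hlower, _⟩ := hrefine P; ⟨Q, hQ, hlower.1⟩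
  · exact csSup_range_eq_csSup_image fun P =>
      let ⟨Q, hQ, hlower, _⟩ := hrefine P; ⟨Q, hQ, hlower.2⟩
  · exact csInf_range_eq_csInf_image fun P =>
      let ⟨Q, hQ, _, hupper⟩ := hrefine P; ⟨Q, hQ, hupper.1⟩
  · exact csInf_range_eq_csInf_image fun P =>
      let ⟨Q, hQ, _, hupper⟩ := hrefine P; ⟨Q, hQ, hupper.2⟩
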